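/- There exist infinitely many quadruples (x_1, x_2, x_3, x_4) ∈ ℚ⁴ satisfying x_3² − 2x_2² + x_1² = 2 and x_4² − 2x_3² + x_2² = 2 which are non-trivial, i.e., for which there is no t ∈ ℚ with x_i² = (t+i)² for all i ∈ {1,2,3,4}. In other words, the Büchi problem of length 4 has infinitely many non-trivial rational solutions. -/

import Mathlib

/-!
A palindromic quadruple `(u, v, v, u)` solves both equations as soon as `u² − v² = 2`, and this
conic has the rational parametrization `u + v = a`, `u − v = 2 / a`. Such a quadruple can only be
trivial if `(t + 2)² = (t + 3)²`, which forces `t = −5/2` and hence `v² = 1/4`; this fails as soon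
as `a > 2`.
-/

section CommRing

variable {R : Type*} [CommRing R]

def IsBuchiQuadruple (x : Fin 4 → R) : Prop :=
  x 2 ^ 2 - 2 * x 1 ^ 2 + x 0 ^ 2 = 2 ∧ x 3 ^ 2 - 2 * x 2 ^ 2 + x 1 ^ 2 = 2

def IsTrivialQuadruple (x : Fin 4 → R) : Prop :=
  ∃ t : R, ∀ i : Fin 4, x i ^ 2 = (t + ((i : ℕ) + 1 : R)) ^ 2

theorem isBuchiQuadruple_palindrome {u v : R} (h : u ^ 2 - v ^ 2 = 2) :
    IsBuchiQuadruple ![u, v, v, u] := by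
  constructor <;> simpa [sub_eq_add_neg, two_mul, add_comm, add_left_comm, add_assoc] using h

theorem IsTrivialQuadruple.four_mul_sq_eq_one {u v : R} (h : IsTrivialQuadruple ![u, v, v, u]) :
    4 * v ^ 2 = 1 := by
  obtain ⟨t, ht⟩ := h
  have h₁ : v ^ 2 = (t + 2) ^ 2 := by simpa [one_add_one_eq_two] using ht 1
  have h₂ : v ^ 2 = (t + 3) ^ 2 := by
    simpa [Matrix.cons_val, (by norm_num : (2 : R) + 1 = 3)] using ht 2
  have hlin : 2 * t + 5 = 0 := by linear_combination h₁ - h₂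
  linear_combination 4 * h₁ + (2 * t + 3) * hlin

end CommRing

section LinearOrderedField

variable {K : Type*} [Field K] [LinearOrder K] [IsStrictOrderedRing K]

def hyperbolaQuadruple (a : K) : Fin 4 → K :=
  ![(a + 2 / a) / 2, (a - 2 / a) / 2, (a - 2 / a) / 2, (a + 2 / a) / 2]

theorem isBuchiQuadruple_hyperbolaQuadruple {a : K} (ha : a ≠ 0) :
    IsBuchiQuadruple (hyperbolaQuadruple a) :=
  isBuchiQuadruple_palindrome (by field_simp; ring)

theorem not_isTrivialQuadruple_hyperbolaQuadruple {a : K} (ha : 2 < a) :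
    ¬ IsTrivialQuadruple (hyperbolaQuadruple a) := by
  intro h
  have hv : 1 < a - 2 / a := by
    have : 2 / a < 1 := (div_lt_one (by linarith)).2 ha
    linarith
  nlinarith [h.four_mul_sq_eq_one]

theorem hyperbolaQuadruple_zero_add_one (a : K) :
    hyperbolaQuadruple a 0 + hyperbolaQuadruple a 1 = a := by
  simp only [hyperbolaQuadruple, Matrix.cons_val_zero, Matrix.cons_val_one]
  ring

theorem hyperbolaQuadruple_injective : Function.Injective (hyperbolaQuadruple (K := K)) :=
  Function.LeftInverse.injective (g := fun x : Fin 4 → K => x 0 + x 1)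
    hyperbolaQuadruple_zero_add_one

end LinearOrderedField

theorem buchi_length_four_nontrivial_infinite :
    {x : Fin 4 → ℚ |
      (x 2 ^ 2 - 2 * x 1 ^ 2 + x 0 ^ 2 = 2 ∧
       x 3 ^ 2 - 2 * x 2 ^ 2 + x 1 ^ 2 = 2) ∧
      ¬ ∃ t : ℚ, ∀ i : Fin 4, x i ^ 2 = (t + ((i : ℕ) + 1 : ℚ)) ^ 2}.Infinite := by
  have h_gt_two (n : ℕ) : (2 : ℚ) < n + 3 := by linarith [n.cast_nonneg (α := ℚ)]
  refine Set.infinite_of_injective_forall_mem (f := fun n : ℕ => hyperbolaQuadruple ((n : ℚ) + 3))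
    (hyperbolaQuadruple_injective.comp ((add_left_injective 3).comp Nat.cast_injective))
    fun n => ⟨?_, ?_⟩
  · exact isBuchiQuadruple_hyperbolaQuadruple (by linarith [h_gt_two n])
  · exact not_isTrivialQuadruple_hyperbolaQuadruple (h_gt_two n)
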